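/- arXiv:2211.03446 — 2 statements merged into one kernel-verified Lean document; each statement's English description precedes it below -/
import Mathlib

section
/- There exists a constant C > 0, independent of γ, such that for every γ ∈ [0,1] and every self-similar profile G ∈ 𝓔_γ one has G(x) ≤ C/|x| for almost every x ∈ ℝ. -/
open MeasureTheory Real Set Filter Topology

/-!
Let `W` be any weight with `|x - y|^γ ≤ W x * W y`. Testing the equation against a `C¹` primitive
`φ` of a bump of width `ε` centred at `r ≠ 0`, signed like `r`, the left side dominates
`∫_{r-ε}^{r+ε} |x| G` while the right side is `O(ε (∫ W G)²)` because `|φ| ≤ 4ε`; Lebesgue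
differentiation then gives `|x| G x ≤ 16 (∫ W G)²` almost everywhere.

For `γ = 0` take `W = 1`. For `γ > 0` take `W x = 1 + x²`, which needs a uniform bound on
`m₂ = ∫ x² G`: testing against truncations of `x²` yields `∫∫ |x-y|^(2+γ) G G = 2 m₂`, while
Jensen's inequality for `t ↦ t^(1+γ/2)` against `G ⊗ G` bounds this from below by
`(2 m₂)^(1+γ/2)`; hence `m₂ ≤ 1/2` and `∫ W G ≤ 3/2`.
-/

noncomputable section

/-- The set `𝓔_γ` of self-similar profiles. -/
def IsProfile (γ : ℝ) (G : ℝ → ℝ) : Prop :=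
  (∀ x, 0 ≤ G x) ∧
  Integrable G ∧
  Integrable (fun x => (1 + |x|) ^ (3 : ℝ) * G x) ∧
  (∫ x, G x) = 1 ∧
  (∫ x, x * G x) = 0 ∧
  ∀ φ : ℝ → ℝ, ContDiff ℝ 1 φ →
    (∃ M, ∀ x, |φ x| ≤ M ∧ |deriv φ x| ≤ M) →
    -(1/4) * (∫ x, x * deriv φ x * G x) =
      (1/2) * ∫ x, ∫ y, |x - y| ^ γ * (2 * φ ((x + y) / 2) - φ x - φ y) * G x * G y

lemma rpow_le_one_add_pow {p t : ℝ} {n : ℕ} (hp : 0 ≤ p) (hpn : p ≤ n) (ht : 0 ≤ t) :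
    t ^ p ≤ (1 + t) ^ n := by
  calc t ^ p ≤ (1 + t) ^ p := rpow_le_rpow ht (by linarith) hp
    _ ≤ (1 + t) ^ (n : ℝ) := rpow_le_rpow_of_exponent_le (by linarith) hpn
    _ = (1 + t) ^ n := rpow_natCast _ _

lemma one_add_abs_sub_le_mul (x y : ℝ) : 1 + |x - y| ≤ (1 + |x|) * (1 + |y|) := by
  nlinarith [abs_sub x y, abs_nonneg x, abs_nonneg y, mul_nonneg (abs_nonneg x) (abs_nonneg y)]

lemma abs_sub_rpow_le_pow_mul {p : ℝ} {n : ℕ} (hp : 0 ≤ p) (hpn : p ≤ n) (x y : ℝ) :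
    |x - y| ^ p ≤ ((1 + |x|) * (1 + |y|)) ^ n :=
  (rpow_le_one_add_pow hp hpn (abs_nonneg _)).trans
    (pow_le_pow_left₀ (by positivity) (one_add_abs_sub_le_mul x y) n)

lemma abs_sub_rpow_le_one_add_sq_mul {γ : ℝ} (hγ0 : 0 ≤ γ) (hγ1 : γ ≤ 1) (x y : ℝ) :
    |x - y| ^ γ ≤ (1 + x ^ 2) * (1 + y ^ 2) := by
  have h : |x - y| ^ γ ≤ 1 + (x - y) ^ 2 / 4 := by
    rcases le_or_gt |x - y| 1 with h | h
    · linarith [rpow_le_one (abs_nonneg (x - y)) h hγ0, sq_nonneg (x - y)]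
    · calc |x - y| ^ γ ≤ |x - y| ^ (1 : ℝ) := rpow_le_rpow_of_exponent_le h.le hγ1
        _ ≤ 1 + (x - y) ^ 2 / 4 := by
          rw [rpow_one, ← sq_abs (x - y)]; nlinarith [sq_nonneg (|x - y| - 2)]
  nlinarith [sq_nonneg (x + y), mul_nonneg (sq_nonneg x) (sq_nonneg y)]

lemma sq_add_sq_le_mul_sq (x y : ℝ) : x ^ 2 + y ^ 2 ≤ ((1 + |x|) * (1 + |y|)) ^ 2 := by
  rw [← sq_abs x, ← sq_abs y]
  nlinarith [abs_nonneg x, abs_nonneg y, mul_nonneg (abs_nonneg x) (abs_nonneg y)]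

lemma abs_sub_rpow_mul_le {γ b : ℝ} (hγ0 : 0 ≤ γ) (hγ1 : γ ≤ 1) {x y : ℝ}
    (hb : |b| ≤ 2 * (x ^ 2 + y ^ 2)) : |x - y| ^ γ * |b| ≤ 2 * ((1 + |x|) * (1 + |y|)) ^ 3 := by
  have hK := abs_sub_rpow_le_pow_mul (n := 1) hγ0 (by simpa using hγ1) x y
  calc |x - y| ^ γ * |b| ≤ ((1 + |x|) * (1 + |y|)) ^ 1 * (2 * ((1 + |x|) * (1 + |y|)) ^ 2) :=
        mul_le_mul hK (hb.trans (by linarith [sq_add_sq_le_mul_sq x y])) (abs_nonneg _)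
          (by positivity)
    _ = 2 * ((1 + |x|) * (1 + |y|)) ^ 3 := by ring

lemma abs_rpow_mul_sq {γ : ℝ} (hγ : 0 ≤ γ) (t : ℝ) : |t| ^ γ * t ^ 2 = |t| ^ (2 + γ) := by
  rw [add_comm, rpow_add' (abs_nonneg t) (by linarith), rpow_two, sq_abs]

lemma sq_rpow (t q : ℝ) : (t ^ 2) ^ q = |t| ^ (2 * q) := by
  rw [← sq_abs, ← rpow_two, ← rpow_mul (abs_nonneg t)]

lemma rpow_add_mul_sub_le_rpow {a t q : ℝ} (ha : 0 < a) (ht : 0 ≤ t) (hq : 1 ≤ q) :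
    a ^ q + q * a ^ (q - 1) * (t - a) ≤ t ^ q := by
  have hs : -1 ≤ t / a - 1 := by linarith [div_nonneg ht ha.le]
  have h := one_add_mul_self_le_rpow_one_add hs hq
  rw [add_sub_cancel, div_rpow ht ha.le, le_div_iff₀ (rpow_pos_of_pos ha q)] at h
  rw [rpow_sub_one ha.ne']
  calc a ^ q + q * (a ^ q / a) * (t - a) = (1 + q * (t / a - 1)) * a ^ q := by
        field_simp
    _ ≤ t ^ q := h

theorem rpow_integral_mul_le_integral_rpow_mul {α : Type*} [MeasurableSpace α] {μ : Measure α}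
    {w f : α → ℝ} {q : ℝ} (hq : 1 ≤ q) (hw : ∀ x, 0 ≤ w x) (hf : ∀ x, 0 ≤ f x)
    (hwi : Integrable w μ) (hw1 : ∫ x, w x ∂μ = 1)
    (hfw : Integrable (fun x => f x * w x) μ) (hfqw : Integrable (fun x => f x ^ q * w x) μ) :
    (∫ x, f x * w x ∂μ) ^ q ≤ ∫ x, f x ^ q * w x ∂μ := by
  set a := ∫ x, f x * w x ∂μ
  have ha0 : 0 ≤ a := integral_nonneg fun x => mul_nonneg (hf x) (hw x)
  rcases ha0.eq_or_lt with ha | ha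
  · rw [← ha, zero_rpow (by linarith)]
    exact integral_nonneg fun x => mul_nonneg (rpow_nonneg (hf x) q) (hw x)
  set b := q * a ^ (q - 1)
  have htangent : ∀ x, (a ^ q - b * a) * w x + b * (f x * w x) ≤ f x ^ q * w x := fun x => by
    have := mul_le_mul_of_nonneg_right (rpow_add_mul_sub_le_rpow ha (hf x) hq) (hw x)
    linarith
  calc a ^ q = ∫ x, (a ^ q - b * a) * w x + b * (f x * w x) ∂μ := by
        rw [integral_add (hwi.const_mul _) (hfw.const_mul _), integral_const_mul,
          integral_const_mul, hw1]
        ring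
    _ ≤ ∫ x, f x ^ q * w x ∂μ :=
        integral_mono ((hwi.const_mul _).add (hfw.const_mul _)) hfqw htangent

lemma abs_integral_integral_le {α : Type*} [MeasurableSpace α] {μ : Measure α}
    {F : α → α → ℝ} {g : α → ℝ} {c : ℝ} (hg : Integrable g μ)
    (hF : ∀ x y, |F x y| ≤ c * (g x * g y)) :
    |∫ x, ∫ y, F x y ∂μ ∂μ| ≤ c * (∫ x, g x ∂μ) ^ 2 := by
  have hinner : ∀ x, ‖∫ y, F x y ∂μ‖ ≤ c * (∫ y, g y ∂μ) * g x := fun x => by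
    calc ‖∫ y, F x y ∂μ‖ ≤ ∫ y, c * g x * g y ∂μ :=
          norm_integral_le_of_norm_le (hg.const_mul _)
            (ae_of_all _ fun y => (hF x y).trans_eq (mul_assoc _ _ _).symm)
      _ = c * (∫ y, g y ∂μ) * g x := by rw [integral_const_mul]; ring
  calc |∫ x, ∫ y, F x y ∂μ ∂μ| ≤ ∫ x, c * (∫ y, g y ∂μ) * g x ∂μ :=
        norm_integral_le_of_norm_le (hg.const_mul _) (ae_of_all _ hinner)
    _ = c * (∫ x, g x ∂μ) ^ 2 := by rw [integral_const_mul]; ring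

/-- Bounded `C¹` truncations of `x ↦ x²`, through which the unbounded test function `x²` is
reached as `ε → 0`. -/
def truncSq (ε x : ℝ) : ℝ := x ^ 2 / (1 + ε * x ^ 2)

section truncSq

variable {ε : ℝ}

lemma one_add_mul_sq_pos (hε : 0 ≤ ε) (x : ℝ) : 0 < 1 + ε * x ^ 2 := by
  nlinarith [mul_nonneg hε (sq_nonneg x)]

lemma hasDerivAt_truncSq (hε : 0 ≤ ε) (x : ℝ) :
    HasDerivAt (truncSq ε) (2 * x / (1 + ε * x ^ 2) ^ 2) x := by
  have hsq : HasDerivAt (fun x : ℝ => x ^ 2) (2 * x) x := by simpa using hasDerivAt_pow 2 x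
  exact (hsq.div ((hsq.const_mul ε).const_add 1) (one_add_mul_sq_pos hε x).ne').congr_deriv
    (by ring)

lemma deriv_truncSq (hε : 0 ≤ ε) : deriv (truncSq ε) = fun x => 2 * x / (1 + ε * x ^ 2) ^ 2 :=
  funext fun x => (hasDerivAt_truncSq hε x).deriv

lemma contDiff_truncSq (hε : 0 ≤ ε) : ContDiff ℝ 1 (truncSq ε) :=
  contDiff_one_iff_deriv.2 ⟨fun x => (hasDerivAt_truncSq hε x).differentiableAt, by
    rw [deriv_truncSq hε]
    exact Continuous.div (by fun_prop) (by fun_prop) fun x =>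
      (pow_pos (one_add_mul_sq_pos hε x) 2).ne'⟩

lemma truncSq_nonneg (hε : 0 ≤ ε) (x : ℝ) : 0 ≤ truncSq ε x :=
  div_nonneg (sq_nonneg x) (one_add_mul_sq_pos hε x).le

lemma truncSq_le_sq (hε : 0 ≤ ε) (x : ℝ) : truncSq ε x ≤ x ^ 2 :=
  div_le_self (sq_nonneg x) (by nlinarith [mul_nonneg hε (sq_nonneg x)])

lemma abs_mul_deriv_truncSq_le (hε : 0 ≤ ε) (x : ℝ) : |x * deriv (truncSq ε) x| ≤ 2 * x ^ 2 := by
  have hd : 1 ≤ (1 + ε * x ^ 2) ^ 2 := one_le_pow₀ (by nlinarith [mul_nonneg hε (sq_nonneg x)])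
  rw [deriv_truncSq hε, mul_div_assoc', show x * (2 * x) = 2 * x ^ 2 by ring, abs_div,
    abs_of_pos (by linarith : (0 : ℝ) < (1 + ε * x ^ 2) ^ 2),
    abs_of_nonneg (by positivity : (0 : ℝ) ≤ 2 * x ^ 2)]
  exact div_le_self (by positivity) hd

lemma exists_bound_truncSq (hε : 0 < ε) :
    ∃ M, ∀ x, |truncSq ε x| ≤ M ∧ |deriv (truncSq ε) x| ≤ M := by
  refine ⟨1 + 1 / ε, fun x => ⟨?_, ?_⟩⟩
  · have hd := one_add_mul_sq_pos hε.le x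
    rw [abs_of_nonneg (truncSq_nonneg hε.le x), truncSq, div_le_iff₀ hd,
      show (1 + 1 / ε) * (1 + ε * x ^ 2) = 1 + x ^ 2 + ε * x ^ 2 + 1 / ε by field_simp; ring]
    nlinarith [mul_nonneg hε.le (sq_nonneg x), one_div_pos.2 hε]
  · have hd := one_add_mul_sq_pos hε.le x
    have h2x : |2 * x| ≤ 1 + x ^ 2 := by
      rw [abs_mul, abs_two]; nlinarith [sq_nonneg (|x| - 1), sq_abs x]
    have hsq : 1 + x ^ 2 ≤ (1 + 1 / ε) * (1 + ε * x ^ 2) := by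
      rw [show (1 + 1 / ε) * (1 + ε * x ^ 2) = 1 + x ^ 2 + ε * x ^ 2 + 1 / ε by field_simp; ring]
      nlinarith [mul_nonneg hε.le (sq_nonneg x), one_div_pos.2 hε]
    rw [deriv_truncSq hε.le, abs_div, abs_of_pos (pow_pos hd 2), div_le_iff₀ (pow_pos hd 2)]
    calc |2 * x| ≤ (1 + 1 / ε) * (1 + ε * x ^ 2) := h2x.trans hsq
      _ ≤ (1 + 1 / ε) * (1 + ε * x ^ 2) ^ 2 := by
        gcongr
        exact le_self_pow₀ (by nlinarith [mul_nonneg hε.le (sq_nonneg x)]) two_ne_zero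

lemma tendsto_truncSq (x : ℝ) : Tendsto (fun ε => truncSq ε x) (𝓝[>] 0) (𝓝 (x ^ 2)) := by
  have hc : ContinuousAt (fun ε : ℝ => x ^ 2 / (1 + ε * x ^ 2)) 0 :=
    ContinuousAt.div (by fun_prop) (by fun_prop) (by simp)
  simpa [truncSq] using hc.tendsto.mono_left nhdsWithin_le_nhds

lemma tendsto_mul_deriv_truncSq (x : ℝ) :
    Tendsto (fun ε => x * deriv (truncSq ε) x) (𝓝[>] 0) (𝓝 (2 * x ^ 2)) := by
  have hc : ContinuousAt (fun ε : ℝ => x * (2 * x / (1 + ε * x ^ 2) ^ 2)) 0 :=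
    continuousAt_const.mul (ContinuousAt.div (by fun_prop) (by fun_prop) (by simp))
  have hlim := hc.tendsto.mono_left (nhdsWithin_le_nhds (s := Ioi 0))
  rw [show x * (2 * x / (1 + 0 * x ^ 2) ^ 2) = 2 * x ^ 2 by ring] at hlim
  refine hlim.congr' (eventually_nhdsWithin_of_forall fun ε (hε : 0 < ε) => ?_)
  show _ = x * deriv (truncSq ε) x
  rw [deriv_truncSq hε.le]

lemma abs_truncSq_midpoint_sub_le {ε : ℝ} (hε : 0 ≤ ε) (x y : ℝ) :
    |2 * truncSq ε ((x + y) / 2) - truncSq ε x - truncSq ε y| ≤ 2 * (x ^ 2 + y ^ 2) := by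
  have := truncSq_le_sq hε ((x + y) / 2)
  have := truncSq_le_sq hε x
  have := truncSq_le_sq hε y
  have := truncSq_nonneg hε ((x + y) / 2)
  have := truncSq_nonneg hε x
  have := truncSq_nonneg hε y
  rw [abs_le]
  constructor <;> nlinarith [sq_nonneg (x - y), sq_nonneg x, sq_nonneg y]

end truncSq

lemma exists_contDiff_deriv_eq_bump (c : ℝ) {ε : ℝ} (hε : 0 < ε) :
    ∃ φ : ℝ → ℝ, ContDiff ℝ 1 φ ∧ (∀ u, |φ u| ≤ 4 * ε) ∧ (∀ u, deriv φ u ∈ Icc (0 : ℝ) 1) ∧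
      EqOn (deriv φ) 1 (Icc (c - ε) (c + ε)) ∧
      EqOn (deriv φ) 0 (Ioo (c - 2 * ε) (c + 2 * ε))ᶜ := by
  let b : ContDiffBump c := ⟨ε, 2 * ε, hε, by linarith⟩
  have hb : Continuous b := b.continuous
  have hderiv : deriv (fun u => ∫ t in c..u, b t) = b :=
    funext fun u => (hb.integral_hasStrictDerivAt c u).hasDerivAt.deriv
  refine ⟨fun u => ∫ t in c..u, b t, contDiff_one_iff_deriv.2
    ⟨fun u => (hb.integral_hasStrictDerivAt c u).hasDerivAt.differentiableAt, by rwa [hderiv]⟩,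
    fun u => ?_, fun u => by rw [hderiv]; exact ⟨b.nonneg, b.le_one⟩, fun u hu => ?_,
    fun u hu => ?_⟩
  · calc ‖∫ t in c..u, b t‖ ≤ ∫ t in uIoc c u, ‖b t‖ :=
          intervalIntegral.norm_integral_le_integral_norm_uIoc
      _ ≤ ∫ t, ‖b t‖ :=
          setIntegral_le_integral b.integrable.norm (ae_of_all _ fun _ => norm_nonneg _)
      _ ≤ volume.real (Metric.closedBall c (2 * ε)) := by
          simpa only [Real.norm_of_nonneg b.nonneg] using b.integral_le_measure_closedBall volume
      _ = 4 * ε := by rw [Real.volume_real_closedBall (by linarith)]; ring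
  · rw [hderiv]
    exact b.one_of_mem_closedBall (by rwa [Real.closedBall_eq_Icc])
  · rw [hderiv]
    exact Function.notMem_support.1 (by rwa [b.support_eq, Real.ball_eq_Ioo])

lemma ae_le_of_setIntegral_Icc_le {f : ℝ → ℝ} (hf : LocallyIntegrable f) {C : ℝ}
    (h : ∀ᵐ r, ∀ᶠ ε in 𝓝[>] 0, ∫ x in Icc (r - ε) (r + ε), f x ≤ 2 * ε * C) :
    ∀ᵐ r, f r ≤ C := by
  filter_upwards [(Besicovitch.vitaliFamily (volume : Measure ℝ)).ae_tendsto_average hf, h]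
    with r hr hC
  refine le_of_tendsto (hr.comp (Besicovitch.tendsto_filterAt volume r)) ?_
  filter_upwards [hC, self_mem_nhdsWithin] with ε hε (hε0 : 0 < ε)
  rw [Function.comp_apply, setAverage_eq, Real.volume_real_closedBall hε0.le,
    Real.closedBall_eq_Icc, smul_eq_mul, inv_mul_le_iff₀ (by positivity)]
  linarith

namespace IsProfile

variable {γ : ℝ} {G : ℝ → ℝ}

lemma integrable_one_add_abs_pow_mul (hG : IsProfile γ G) :
    Integrable (fun x => (1 + |x|) ^ 3 * G x) := by
  have h : ((3 : ℕ) : ℝ) = 3 := by norm_num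
  simpa only [← h, rpow_natCast] using hG.2.2.1

lemma integrable_mul_of_abs_le {c : ℝ → ℝ} {A : ℝ} (hG : IsProfile γ G) (hc : AEStronglyMeasurable c)
    (hb : ∀ x, |c x| ≤ A * (1 + |x|) ^ 3) : Integrable (fun x => c x * G x) := by
  refine (hG.integrable_one_add_abs_pow_mul.const_mul A).mono
    (hc.mul hG.2.1.aestronglyMeasurable) (ae_of_all _ fun x => ?_)
  rw [norm_mul, norm_of_nonneg (hG.1 x), Real.norm_eq_abs, ← mul_assoc]
  exact (mul_le_mul_of_nonneg_right (hb x) (hG.1 x)).trans (le_abs_self _)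

lemma integrable_prod_mul_of_abs_le {c : ℝ × ℝ → ℝ} {A : ℝ} (hG : IsProfile γ G)
    (hc : AEStronglyMeasurable c (volume.prod volume))
    (hb : ∀ x y, |c (x, y)| ≤ A * ((1 + |x|) * (1 + |y|)) ^ 3) :
    Integrable (fun p => c p * (G p.1 * G p.2)) (volume.prod volume) := by
  have h3 := hG.integrable_one_add_abs_pow_mul
  have hGG : AEStronglyMeasurable (fun p : ℝ × ℝ => G p.1 * G p.2) (volume.prod volume) :=
    (hG.2.1.mul_prod hG.2.1).aestronglyMeasurable
  refine ((h3.mul_prod h3).const_mul A).mono (hc.mul hGG) (ae_of_all _ fun ⟨x, y⟩ => ?_)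
  have hGxy : 0 ≤ G x * G y := mul_nonneg (hG.1 x) (hG.1 y)
  rw [norm_mul, norm_of_nonneg hGxy, Real.norm_eq_abs]
  refine (mul_le_mul_of_nonneg_right (hb x y) hGxy).trans (le_of_eq_of_le ?_ (le_abs_self _))
  ring

lemma integrable_sq_mul (hG : IsProfile γ G) : Integrable (fun x => x ^ 2 * G x) :=
  hG.integrable_mul_of_abs_le (A := 1) (by fun_prop) fun x => by
    rw [one_mul, abs_of_nonneg (sq_nonneg x), ← sq_abs x]
    nlinarith [abs_nonneg x, pow_nonneg (abs_nonneg x) 3]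

lemma integrable_id_mul (hG : IsProfile γ G) : Integrable (fun x => x * G x) :=
  hG.integrable_mul_of_abs_le (A := 1) (by fun_prop) fun x => by
    rw [one_mul]
    nlinarith [abs_nonneg x, pow_nonneg (abs_nonneg x) 3, sq_nonneg |x|]

lemma tendsto_integral_mul_deriv_truncSq (hG : IsProfile γ G) :
    Tendsto (fun ε => ∫ x, x * deriv (truncSq ε) x * G x) (𝓝[>] 0)
      (𝓝 (2 * ∫ x, x ^ 2 * G x)) := by
  rw [← integral_const_mul]
  refine tendsto_integral_filter_of_dominated_convergence _
    (eventually_nhdsWithin_of_forall fun ε (hε : 0 < ε) => ?_)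
    (eventually_nhdsWithin_of_forall fun ε (hε : 0 < ε) => ae_of_all _ fun x => ?_)
    (hG.integrable_sq_mul.const_mul 2)
    (ae_of_all _ fun x => ?_)
  · exact (continuous_id.mul ((contDiff_truncSq hε.le).continuous_deriv le_rfl)
      ).aestronglyMeasurable.mul hG.2.1.aestronglyMeasurable
  · rw [norm_mul, norm_of_nonneg (hG.1 x), ← mul_assoc]
    exact mul_le_mul_of_nonneg_right (abs_mul_deriv_truncSq_le hε.le x) (hG.1 x)
  · simpa only [mul_assoc] using (tendsto_mul_deriv_truncSq x).mul_const (G x)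

lemma integrable_prod_truncSq (hG : IsProfile γ G) (hγ0 : 0 ≤ γ) (hγ1 : γ ≤ 1) {ε : ℝ}
    (hε : 0 ≤ ε) :
    Integrable (fun p : ℝ × ℝ => |p.1 - p.2| ^ γ *
      (2 * truncSq ε ((p.1 + p.2) / 2) - truncSq ε p.1 - truncSq ε p.2) * G p.1 * G p.2)
      (volume.prod volume) := by
  have hc : Continuous (truncSq ε) := (contDiff_truncSq hε).continuous
  simpa only [mul_assoc] using hG.integrable_prod_mul_of_abs_le (A := 2)
    (c := fun p => |p.1 - p.2| ^ γ *
      (2 * truncSq ε ((p.1 + p.2) / 2) - truncSq ε p.1 - truncSq ε p.2))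
    (by fun_prop) fun x y => by
      rw [abs_mul, abs_of_nonneg (rpow_nonneg (abs_nonneg _) _)]
      exact abs_sub_rpow_mul_le hγ0 hγ1 (abs_truncSq_midpoint_sub_le hε x y)

lemma tendsto_integral_prod_truncSq (hG : IsProfile γ G) (hγ0 : 0 ≤ γ) (hγ1 : γ ≤ 1) :
    Tendsto (fun ε => ∫ p, |p.1 - p.2| ^ γ *
      (2 * truncSq ε ((p.1 + p.2) / 2) - truncSq ε p.1 - truncSq ε p.2) * G p.1 * G p.2
        ∂(volume.prod volume)) (𝓝[>] 0)
      (𝓝 (-(1 / 2) * ∫ p, |p.1 - p.2| ^ (2 + γ) * (G p.1 * G p.2) ∂(volume.prod volume))) := by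
  have hlim : ∀ p : ℝ × ℝ,
      |p.1 - p.2| ^ γ * (2 * ((p.1 + p.2) / 2) ^ 2 - p.1 ^ 2 - p.2 ^ 2) * G p.1 * G p.2 =
        -(1 / 2) * (|p.1 - p.2| ^ (2 + γ) * (G p.1 * G p.2)) := fun p => by
    rw [← abs_rpow_mul_sq hγ0]; ring
  rw [← integral_const_mul, ← integral_congr_ae (ae_of_all _ hlim)]
  refine tendsto_integral_filter_of_dominated_convergence
    (fun p => 2 * ((1 + |p.1|) * (1 + |p.2|)) ^ 3 * (G p.1 * G p.2))
    (eventually_nhdsWithin_of_forall fun ε (hε : 0 < ε) =>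
      (hG.integrable_prod_truncSq hγ0 hγ1 hε.le).aestronglyMeasurable)
    (eventually_nhdsWithin_of_forall fun ε (hε : 0 < ε) => ae_of_all _ fun ⟨x, y⟩ => ?_)
    (hG.integrable_prod_mul_of_abs_le (A := 2) (by fun_prop) fun x y => by
      rw [abs_of_nonneg (by positivity)])
    (ae_of_all _ fun p => ?_)
  · have hGG := mul_nonneg (hG.1 x) (hG.1 y)
    rw [mul_assoc, norm_mul, norm_of_nonneg hGG, Real.norm_eq_abs, abs_mul,
      abs_of_nonneg (rpow_nonneg (abs_nonneg _) _)]
    exact mul_le_mul_of_nonneg_right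
      (abs_sub_rpow_mul_le hγ0 hγ1 (abs_truncSq_midpoint_sub_le hε.le x y)) hGG
  · exact (((((tendsto_truncSq _).const_mul 2).sub (tendsto_truncSq _)).sub
      (tendsto_truncSq _)).const_mul _).mul_const _ |>.mul_const _

theorem integral_prod_abs_sub_rpow (hG : IsProfile γ G) (hγ0 : 0 ≤ γ) (hγ1 : γ ≤ 1) :
    ∫ p, |p.1 - p.2| ^ (2 + γ) * (G p.1 * G p.2) ∂(volume.prod volume) =
      2 * ∫ x, x ^ 2 * G x := by
  have hweak : ∀ᶠ ε in 𝓝[>] (0 : ℝ), -(1 / 4) * ∫ x, x * deriv (truncSq ε) x * G x =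
      (1 / 2) * ∫ p, |p.1 - p.2| ^ γ *
        (2 * truncSq ε ((p.1 + p.2) / 2) - truncSq ε p.1 - truncSq ε p.2) * G p.1 * G p.2
          ∂(volume.prod volume) :=
    eventually_nhdsWithin_of_forall fun ε (hε : 0 < ε) => by
      rw [hG.2.2.2.2.2 _ (contDiff_truncSq hε.le) (exists_bound_truncSq hε),
        integral_integral (hG.integrable_prod_truncSq hγ0 hγ1 hε.le)]
  have h := tendsto_nhds_unique
    ((hG.tendsto_integral_mul_deriv_truncSq.const_mul (-(1 / 4))).congr' hweak)
    ((hG.tendsto_integral_prod_truncSq hγ0 hγ1).const_mul (1 / 2))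
  linarith

lemma integral_prod_sub_sq (hG : IsProfile γ G) :
    ∫ p, (p.1 - p.2) ^ 2 * (G p.1 * G p.2) ∂(volume.prod volume) = 2 * ∫ x, x ^ 2 * G x := by
  have h2 := hG.integrable_sq_mul
  have h1 := hG.integrable_id_mul
  obtain ⟨-, h0, -, hmass, hmom, -⟩ := hG
  calc ∫ p, (p.1 - p.2) ^ 2 * (G p.1 * G p.2) ∂(volume.prod volume)
      = ∫ p, ((p.1 ^ 2 * G p.1) * G p.2 + G p.1 * (p.2 ^ 2 * G p.2)) -
          2 * ((p.1 * G p.1) * (p.2 * G p.2)) ∂(volume.prod volume) := by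
        congr 1; funext p; ring
    _ = 2 * ∫ x, x ^ 2 * G x := by
        rw [integral_sub (by exact (h2.mul_prod h0).add (h0.mul_prod h2))
            (by exact (h1.mul_prod h1).const_mul 2),
          integral_add (h2.mul_prod h0) (h0.mul_prod h2), integral_const_mul,
          integral_prod_mul (fun x => x ^ 2 * G x) G, integral_prod_mul G (fun x => x ^ 2 * G x),
          integral_prod_mul (fun x => x * G x) (fun x => x * G x), hmass, hmom]
        ring

theorem integral_sq_mul_le_half (hG : IsProfile γ G) (hγ0 : 0 < γ) (hγ1 : γ ≤ 1) :
    ∫ x, x ^ 2 * G x ≤ 1 / 2 := by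
  set q := 1 + γ / 2
  have hq : 1 < q := by simp only [q]; linarith
  have hsq : ∀ x y : ℝ, ((x - y) ^ 2) ^ q = |x - y| ^ (2 + γ) := fun x y => by
    rw [sq_rpow]; congr 1; ring
  have hjensen := rpow_integral_mul_le_integral_rpow_mul (μ := volume.prod volume)
    (w := fun p => G p.1 * G p.2) (f := fun p => (p.1 - p.2) ^ 2) (q := q) hq.le
    (fun p => mul_nonneg (hG.1 _) (hG.1 _)) (fun p => sq_nonneg _)
    (hG.2.1.mul_prod hG.2.1) (by rw [integral_prod_mul, hG.2.2.2.1, one_mul])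
    (hG.integrable_prod_mul_of_abs_le (A := 1) (by fun_prop) fun x y => by
      simpa [rpow_two, sq_abs] using
        abs_sub_rpow_le_pow_mul (p := 2) (n := 3) (by norm_num) (by norm_num) x y)
    (hG.integrable_prod_mul_of_abs_le (A := 1) (by fun_prop (disch := linarith)) fun x y => by
      rw [hsq, one_mul, abs_of_nonneg (rpow_nonneg (abs_nonneg _) _)]
      exact abs_sub_rpow_le_pow_mul (by linarith) (by push_cast; linarith) x y)
  simp only [hsq] at hjensen
  rw [hG.integral_prod_sub_sq, hG.integral_prod_abs_sub_rpow hγ0.le hγ1] at hjensen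
  by_contra! h
  have := rpow_lt_rpow_of_exponent_lt (by linarith : 1 < 2 * ∫ x, x ^ 2 * G x) hq
  rw [rpow_one] at this
  linarith

section Weight

variable {W : ℝ → ℝ}

lemma abs_integral_mul_deriv_le (hG : IsProfile γ G) (hK : ∀ x y, |x - y| ^ γ ≤ W x * W y)
    (hWi : Integrable (fun x => W x * G x)) {φ : ℝ → ℝ} {B : ℝ} (hφ : ContDiff ℝ 1 φ)
    (hφ' : ∃ M, ∀ x, |deriv φ x| ≤ M) (hB : ∀ x, |φ x| ≤ B) :
    |∫ x, x * deriv φ x * G x| ≤ 8 * B * (∫ x, W x * G x) ^ 2 := by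
  obtain ⟨M, hM⟩ := hφ'
  have hweak := hG.2.2.2.2.2 φ hφ
    ⟨max B M, fun x => ⟨(hB x).trans (le_max_left _ _), (hM x).trans (le_max_right _ _)⟩⟩
  have hF : ∀ x y, |(|x - y| ^ γ * (2 * φ ((x + y) / 2) - φ x - φ y) * G x * G y)| ≤
      4 * B * (W x * G x * (W y * G y)) := fun x y => by
    have hmid := abs_le.1 (hB ((x + y) / 2))
    have hx := abs_le.1 (hB x)
    have hy := abs_le.1 (hB y)
    have hbr : |2 * φ ((x + y) / 2) - φ x - φ y| ≤ 4 * B := abs_le.2 ⟨by linarith, by linarith⟩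
    have hK0 : 0 ≤ |x - y| ^ γ := rpow_nonneg (abs_nonneg _) _
    rw [abs_mul, abs_mul, abs_mul, abs_of_nonneg hK0, abs_of_nonneg (hG.1 x),
      abs_of_nonneg (hG.1 y)]
    calc |x - y| ^ γ * |2 * φ ((x + y) / 2) - φ x - φ y| * G x * G y
        ≤ W x * W y * (4 * B) * G x * G y := by
          gcongr
          · exact hG.1 y
          · exact hG.1 x
          · exact hK0.trans (hK x y)
          · exact hK x y
      _ = 4 * B * (W x * G x * (W y * G y)) := by ring
  have hD := abs_integral_integral_le hWi hF
  rw [show ∫ x, x * deriv φ x * G x = -2 * ∫ x, ∫ y, |x - y| ^ γ *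
    (2 * φ ((x + y) / 2) - φ x - φ y) * G x * G y by linarith, abs_mul]
  norm_num
  linarith

lemma setIntegral_Icc_abs_mul_le (hG : IsProfile γ G) (hK : ∀ x y, |x - y| ^ γ ≤ W x * W y)
    (hWi : Integrable (fun x => W x * G x)) {r ε : ℝ} (hε : 0 < ε) (hεr : 2 * ε ≤ |r|) :
    ∫ x in Icc (r - ε) (r + ε), |x| * G x ≤ 32 * ε * (∫ x, W x * G x) ^ 2 := by
  obtain ⟨φ, hφ, hφB, hφ'01, hφ'1, hφ'0⟩ := exists_contDiff_deriv_eq_bump r hε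
  obtain ⟨s, hs, hsign⟩ : ∃ s : ℝ, |s| = 1 ∧ ∀ x ∈ Ioo (r - 2 * ε) (r + 2 * ε), x * s = |x| := by
    rcases le_or_gt 0 r with hr | hr
    · rw [abs_of_nonneg hr] at hεr
      exact ⟨1, abs_one, fun x hx => by rw [mul_one, abs_of_pos (by linarith [hx.1])]⟩
    · rw [abs_of_neg hr] at hεr
      exact ⟨-1, by simp, fun x hx => by rw [mul_neg_one, abs_of_neg (by linarith [hx.2])]⟩
  have hderiv : ∀ x, deriv (fun u => s * φ u) x = s * deriv φ x := fun x =>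
    deriv_const_mul s ((hφ.differentiable one_ne_zero).differentiableAt)
  have hψ : ContDiff ℝ 1 (fun u => s * φ u) := contDiff_const.mul hφ
  have hbound := hG.abs_integral_mul_deriv_le hK hWi hψ
    ⟨1, fun x => by rw [hderiv, abs_mul, hs, one_mul, abs_of_nonneg (hφ'01 x).1]; exact (hφ'01 x).2⟩
    (B := 4 * ε) fun x => by rw [abs_mul, hs, one_mul]; exact hφB x
  have hpt : ∀ x, (Icc (r - ε) (r + ε)).indicator (fun x => |x| * G x) x ≤
      x * deriv (fun u => s * φ u) x * G x := fun x => by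
    rw [hderiv]
    by_cases hx : x ∈ Ioo (r - 2 * ε) (r + 2 * ε)
    · rw [show x * (s * deriv φ x) * G x = |x| * deriv φ x * G x by rw [← hsign x hx]; ring]
      by_cases hx' : x ∈ Icc (r - ε) (r + ε)
      · rw [indicator_of_mem hx', hφ'1 hx', Pi.one_apply, mul_one]
      · rw [indicator_of_notMem hx']
        exact mul_nonneg (mul_nonneg (abs_nonneg x) (hφ'01 x).1) (hG.1 x)
    · rw [hφ'0 hx, indicator_of_notMem fun h => hx ⟨by linarith [h.1], by linarith [h.2]⟩]
      simp
  have hint : Integrable (fun x => x * deriv (fun u => s * φ u) x * G x) :=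
    hG.integrable_mul_of_abs_le (A := 1)
      (continuous_id.mul (hψ.continuous_deriv le_rfl)).aestronglyMeasurable fun x => by
        rw [hderiv, abs_mul, abs_mul, hs, one_mul, one_mul, abs_of_nonneg (hφ'01 x).1]
        nlinarith [abs_nonneg x, (hφ'01 x).1, (hφ'01 x).2, pow_nonneg (abs_nonneg x) 3,
          sq_nonneg |x|]
  calc ∫ x in Icc (r - ε) (r + ε), |x| * G x
      = ∫ x, (Icc (r - ε) (r + ε)).indicator (fun x => |x| * G x) x :=
        (integral_indicator measurableSet_Icc).symm
    _ ≤ ∫ x, x * deriv (fun u => s * φ u) x * G x :=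
        integral_mono_of_nonneg (ae_of_all _ fun x => indicator_nonneg
          (fun x _ => mul_nonneg (abs_nonneg x) (hG.1 x)) x) hint (ae_of_all _ hpt)
    _ ≤ 8 * (4 * ε) * (∫ x, W x * G x) ^ 2 := (le_abs_self _).trans hbound
    _ = 32 * ε * (∫ x, W x * G x) ^ 2 := by ring

theorem ae_le_div_abs (hG : IsProfile γ G) (hK : ∀ x y, |x - y| ^ γ ≤ W x * W y)
    (hWi : Integrable (fun x => W x * G x)) :
    ∀ᵐ x, G x ≤ 16 * (∫ x, W x * G x) ^ 2 / |x| := by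
  have habs : Integrable (fun x => |x| * G x) :=
    hG.integrable_mul_of_abs_le (A := 1) continuous_abs.aestronglyMeasurable fun x => by
      rw [abs_abs, one_mul]
      nlinarith [abs_nonneg x, pow_nonneg (abs_nonneg x) 3, sq_nonneg |x|]
  have hbound := ae_le_of_setIntegral_Icc_le habs.locallyIntegrable
    (C := 16 * (∫ x, W x * G x) ^ 2) <| by
      filter_upwards [Measure.ae_ne volume 0] with r hr
      filter_upwards [Ioc_mem_nhdsGT (show 0 < |r| / 2 by positivity)] with ε hε
      linarith [hG.setIntegral_Icc_abs_mul_le hK hWi hε.1 (by linarith [hε.2])]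
  filter_upwards [hbound, Measure.ae_ne volume 0] with x hx hx0
  rw [le_div_iff₀ (abs_pos.2 hx0)]
  linarith

end Weight

end IsProfile

/-- **Uniform pointwise upper bound.** There is a constant `C > 0`, independent of `γ`,
such that `G(x) ≤ C/|x|` for a.e. `x ∈ ℝ`, for every `γ ∈ [0,1]` and `G ∈ 𝓔_γ`. -/
theorem uniform_pointwise_bound :
    ∃ C > (0:ℝ), ∀ γ ∈ Icc (0:ℝ) 1, ∀ G : ℝ → ℝ, IsProfile γ G →
      ∀ᵐ x : ℝ, G x ≤ C / |x| := by
  refine ⟨36, by norm_num, fun γ ⟨hγ0, hγ1⟩ G hG => ?_⟩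
  suffices ∃ W : ℝ → ℝ, (∀ x y, |x - y| ^ γ ≤ W x * W y) ∧
      Integrable (fun x => W x * G x) ∧ (∫ x, W x * G x) ^ 2 ≤ 9 / 4 by
    obtain ⟨W, hK, hWi, hW⟩ := this
    filter_upwards [hG.ae_le_div_abs hK hWi] with x hx
    exact hx.trans (div_le_div_of_nonneg_right (by linarith) (abs_nonneg x))
  rcases hγ0.eq_or_lt with rfl | hγ
  -- for `γ = 0` the second-moment identity holds for every `G` and bounds nothing
  · exact ⟨fun _ => 1, fun x y => by simp, by simpa using hG.2.1, by simp [hG.2.2.2.1]; norm_num⟩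
  · have hm2 := hG.integral_sq_mul_le_half hγ hγ1
    have hm2' : 0 ≤ ∫ x, x ^ 2 * G x := integral_nonneg fun x => mul_nonneg (sq_nonneg x) (hG.1 x)
    refine ⟨fun x => 1 + x ^ 2, abs_sub_rpow_le_one_add_sq_mul hγ0 hγ1,
      by simp only [add_mul, one_mul]; exact hG.2.1.add hG.integrable_sq_mul, ?_⟩
    simp only [add_mul, one_mul]
    rw [integral_add hG.2.1 hG.integrable_sq_mul, hG.2.2.2.1]
    nlinarith

end
end

section
/- (i) Let γ ∈ (0,1) and let G ∈ 𝓔_γ with G ∈ L²(ℝ). Set Σ_γ(y) = ∫_ℝ |x−y|^γ G(x) dx and κ_γ = 2^{−γ} ∫_ℝ G(x)(1+|x|)^{−γ} dx. Then for every δ̃ ∈ (0,1) and every y ∈ ℝ: Σ_γ(y) ≥ κ_γ (1+|y|)^γ − (1 − δ̃^γ) − √(2δ̃) ‖G‖_{L²(ℝ)}. (ii) Moreover, for any family (G_γ)_{γ∈(0,1)} with G_γ ∈ 𝓔_γ, the corresponding κ_γ = 2^{−γ} ∫_ℝ G_γ(x)(1+|x|)^{−γ} dx satisfies κ_γ → 1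 as γ → 0⁺. -/
/-!
(i) Pointwise, `((1 + |y|) / (2 (1 + |x|)))^γ - (1 - δ^γ) - 1_{B(y,δ)}(x) ≤ |x - y|^γ`: off the
ball `|x - y|^γ ≥ δ^γ`, and when the ratio exceeds `1` it is itself at most `|x - y|`.
Integrating against `G` gives the bound, since `∫_{B(y,δ)} G ≤ √(2δ) ‖G‖₂` by Cauchy–Schwarz.

(ii) Trivially `κ_γ ≤ 1`; the lower bound needs tightness uniform in `γ`. Testing the equation
with `x²` (through the bounded truncations `R²x²/(R² + x²)` and dominated convergence) gives
`∫∫ |x - y|^γ (x - y)² G G = 2 ∫ x² G = ∫∫ (x - y)² G G`, and as `γ (t² - 3) ≤ t² (|t|^γ - 1)`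
this forces `∫ x² G ≤ 3/2` for every `γ`. By Chebyshev `κ_γ ≥ (2 (1 + R))^{-γ} (1 - 3/(2R²))`,
whose limit as `γ → 0` is `1 - 3/(2R²)`, arbitrarily close to `1`.
-/

open MeasureTheory Real Set Filter

noncomputable section

open Topology

lemma rpow_le_one_add {t γ : ℝ} (ht : 0 ≤ t) (hγ0 : 0 ≤ γ) (hγ1 : γ ≤ 1) : t ^ γ ≤ 1 + t := by
  rcases le_total t 1 with h | h
  · linarith [rpow_le_one ht h hγ0]
  · linarith [rpow_le_self_of_one_le h hγ1]

lemma rpow_abs_sub_le_mul {γ : ℝ} (hγ0 : 0 ≤ γ) (hγ1 : γ ≤ 1) (x y : ℝ) :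
    |x - y| ^ γ ≤ (1 + |x|) * (1 + |y|) := by
  have := rpow_le_one_add (abs_nonneg (x - y)) hγ0 hγ1
  nlinarith [abs_sub x y, abs_nonneg x, abs_nonneg y]

lemma sq_add_sq_le_one_add_abs_sq_mul (x y : ℝ) :
    x ^ 2 + y ^ 2 ≤ (1 + |x|) ^ 2 * (1 + |y|) ^ 2 := by
  have hx : 1 + x ^ 2 ≤ (1 + |x|) ^ 2 := by nlinarith [abs_nonneg x, sq_abs x]
  have hy : 1 + y ^ 2 ≤ (1 + |y|) ^ 2 := by nlinarith [abs_nonneg y, sq_abs y]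
  nlinarith [mul_le_mul hx hy (by positivity) (by positivity),
    mul_nonneg (sq_nonneg x) (sq_nonneg y)]

lemma rpow_abs_sub_mul_sq_add_sq_le {γ : ℝ} (hγ0 : 0 ≤ γ) (hγ1 : γ ≤ 1) (x y : ℝ) :
    |x - y| ^ γ * (x ^ 2 + y ^ 2) ≤ (1 + |x|) ^ 3 * (1 + |y|) ^ 3 :=
  calc |x - y| ^ γ * (x ^ 2 + y ^ 2)
      ≤ ((1 + |x|) * (1 + |y|)) * ((1 + |x|) ^ 2 * (1 + |y|) ^ 2) :=
        mul_le_mul (rpow_abs_sub_le_mul hγ0 hγ1 x y) (sq_add_sq_le_one_add_abs_sq_mul x y)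
          (by positivity) (by positivity)
    _ = (1 + |x|) ^ 3 * (1 + |y|) ^ 3 := by ring

lemma sq_sub_three_le_sq_mul_log (t : ℝ) : t ^ 2 - 3 ≤ t ^ 2 * log |t| := by
  rcases eq_or_ne t 0 with rfl | ht
  · norm_num
  have ht' : 0 < |t| := abs_pos.2 ht
  rcases le_or_gt (exp 1) |t| with he | he
  · have : 1 ≤ log |t| := by rwa [le_log_iff_exp_le ht']
    nlinarith [sq_nonneg t]
  · have hlog := one_sub_inv_le_log_of_pos ht'
    have h3 : |t| < 3 := he.trans (by linarith [exp_one_lt_d9])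
    have : t ^ 2 * (1 - |t|⁻¹) = t ^ 2 - |t| := by
      rw [← sq_abs t]; field_simp
    nlinarith [mul_le_mul_of_nonneg_left hlog (sq_nonneg t)]

lemma mul_log_le_rpow_sub_one {s γ : ℝ} (hs : 0 < s) : γ * log s ≤ s ^ γ - 1 := by
  rw [← log_rpow hs]
  exact log_le_sub_one_of_pos (rpow_pos_of_pos hs γ)

lemma mul_sq_sub_three_le {γ : ℝ} (hγ : 0 ≤ γ) (t : ℝ) :
    γ * (t ^ 2 - 3) ≤ t ^ 2 * (|t| ^ γ - 1) := by
  rcases eq_or_ne t 0 with rfl | ht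
  · norm_num [hγ]
  calc γ * (t ^ 2 - 3) ≤ γ * (t ^ 2 * log |t|) :=
        mul_le_mul_of_nonneg_left (sq_sub_three_le_sq_mul_log t) hγ
    _ = t ^ 2 * (γ * log |t|) := by ring
    _ ≤ t ^ 2 * (|t| ^ γ - 1) :=
        mul_le_mul_of_nonneg_left (mul_log_le_rpow_sub_one (abs_pos.2 ht)) (sq_nonneg t)

lemma one_add_rpow_neg_mul_one_sub_sq_div_le {γ R : ℝ} (hγ : 0 ≤ γ) (hR : 0 < R) (x : ℝ) :
    (1 + R) ^ (-γ) * (1 - x ^ 2 / R ^ 2) ≤ (1 + |x|) ^ (-γ) := by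
  have hRγ : 0 ≤ (1 + R) ^ (-γ) := by positivity
  rcases le_or_gt |x| R with hx | hx
  · calc (1 + R) ^ (-γ) * (1 - x ^ 2 / R ^ 2) ≤ (1 + R) ^ (-γ) :=
          mul_le_of_le_one_right hRγ (by linarith [div_nonneg (sq_nonneg x) (sq_nonneg R)])
      _ ≤ (1 + |x|) ^ (-γ) :=
          rpow_le_rpow_of_nonpos (by positivity) (by linarith) (neg_nonpos.2 hγ)
  · have : 1 < x ^ 2 / R ^ 2 := by
      rw [one_lt_div (by positivity), ← sq_abs x]
      exact pow_lt_pow_left₀ hx hR.le two_ne_zero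
    nlinarith [rpow_nonneg (by positivity : (0 : ℝ) ≤ 1 + |x|) (-γ)]

lemma rpow_neg_mul_sub_le_rpow_abs_sub {γ δ : ℝ} (hγ : 0 ≤ γ) (hδ0 : 0 ≤ δ) (hδ1 : δ ≤ 1)
    (x y : ℝ) :
    2 ^ (-γ) * (1 + |y|) ^ γ * (1 + |x|) ^ (-γ) - (1 - δ ^ γ)
      - (Metric.ball y δ).indicator 1 x ≤ |x - y| ^ γ := by
  have hx : 0 < 1 + |x| := by positivity
  have hratio : 2 ^ (-γ) * (1 + |y|) ^ γ * (1 + |x|) ^ (-γ) =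
      ((1 + |y|) / (2 * (1 + |x|))) ^ γ := by
    rw [div_rpow (by positivity) (by positivity), mul_rpow zero_le_two hx.le,
      rpow_neg zero_le_two, rpow_neg hx.le]
    ring
  have hδγ : δ ^ γ ≤ 1 := rpow_le_one hδ0 hδ1 hγ
  have hind : 0 ≤ (Metric.ball y δ).indicator (1 : ℝ → ℝ) x :=
    Set.indicator_nonneg (fun _ _ => zero_le_one) x
  rw [hratio]
  rcases le_or_gt ((1 + |y|) / (2 * (1 + |x|))) 1 with hr | hr
  · have hrγ : ((1 + |y|) / (2 * (1 + |x|))) ^ γ ≤ 1 := rpow_le_one (by positivity) hr hγ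
    by_cases hxB : x ∈ Metric.ball y δ
    · rw [Set.indicator_of_mem hxB, Pi.one_apply]
      linarith [rpow_nonneg (abs_nonneg (x - y)) γ]
    · have : δ ≤ |x - y| := by simpa [Metric.mem_ball, Real.dist_eq] using hxB
      linarith [rpow_le_rpow hδ0 this hγ]
  · -- the ratio exceeds `1` only when `|y| > 1 + 2|x|`
    have hyx : |y| - |x| ≤ |x - y| := by
      rw [abs_sub_comm]; exact abs_sub_abs_le_abs_sub y x
    have hr' : (1 + |y|) / (2 * (1 + |x|)) ≤ |x - y| := by
      rw [one_lt_div (by positivity)] at hr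
      rw [div_le_iff₀ (by positivity)]
      nlinarith [abs_nonneg x]
    linarith [rpow_le_rpow (by positivity) hr' hγ]

def sqTrunc (R x : ℝ) : ℝ := R ^ 2 * x ^ 2 / (R ^ 2 + x ^ 2)

section sqTrunc

variable {R : ℝ}

lemma sqTrunc_eq_sq_mul (R x : ℝ) : sqTrunc R x = x ^ 2 * (R ^ 2 / (R ^ 2 + x ^ 2)) := by
  unfold sqTrunc; ring

lemma hasDerivAt_sqTrunc (hR : R ≠ 0) (x : ℝ) :
    HasDerivAt (sqTrunc R) (2 * R ^ 4 * x / (R ^ 2 + x ^ 2) ^ 2) x := by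
  have := ((hasDerivAt_pow 2 x).const_mul (R ^ 2)).div
    ((hasDerivAt_pow 2 x).const_add (R ^ 2)) (by positivity)
  refine (this : HasDerivAt (sqTrunc R) _ x).congr_deriv ?_
  push_cast
  ring

lemma deriv_sqTrunc (hR : R ≠ 0) :
    deriv (sqTrunc R) = fun x => 2 * R ^ 4 * x / (R ^ 2 + x ^ 2) ^ 2 :=
  funext fun x => (hasDerivAt_sqTrunc hR x).deriv

lemma contDiff_sqTrunc (hR : R ≠ 0) : ContDiff ℝ 1 (sqTrunc R) :=
  (contDiff_const.mul (contDiff_id.pow 2)).div (contDiff_const.add (contDiff_id.pow 2))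
    fun x => by positivity

@[fun_prop]
lemma measurable_sqTrunc (R : ℝ) : Measurable (sqTrunc R) := by
  unfold sqTrunc; fun_prop

lemma sqTrunc_nonneg (R x : ℝ) : 0 ≤ sqTrunc R x := by
  unfold sqTrunc; positivity

lemma sqTrunc_le_sq (hR : R ≠ 0) (x : ℝ) : sqTrunc R x ≤ x ^ 2 := by
  rw [sqTrunc, div_le_iff₀ (by positivity)]
  nlinarith [sq_nonneg x, pow_two_nonneg (x ^ 2)]

lemma sqTrunc_le_sq_left (hR : R ≠ 0) (x : ℝ) : sqTrunc R x ≤ R ^ 2 := by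
  rw [sqTrunc, div_le_iff₀ (by positivity)]
  nlinarith [sq_nonneg R, pow_two_nonneg (R ^ 2)]

lemma abs_deriv_sqTrunc_le (hR : 0 < R) (x : ℝ) : |deriv (sqTrunc R) x| ≤ R := by
  rw [deriv_sqTrunc hR.ne', abs_div, abs_of_pos (by positivity : (0 : ℝ) < (R ^ 2 + x ^ 2) ^ 2),
    div_le_iff₀ (by positivity), abs_mul, abs_of_pos (by positivity : (0 : ℝ) < 2 * R ^ 4)]
  have amgm : 2 * R * |x| ≤ R ^ 2 + x ^ 2 := by nlinarith [sq_nonneg (R - |x|), sq_abs x]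
  have : R ^ 2 ≤ R ^ 2 + x ^ 2 := by nlinarith [sq_nonneg x]
  calc 2 * R ^ 4 * |x| = R ^ 3 * (2 * R * |x|) := by ring
    _ ≤ R ^ 3 * (R ^ 2 + x ^ 2) := by gcongr
    _ = R * (R ^ 2 * (R ^ 2 + x ^ 2)) := by ring
    _ ≤ R * ((R ^ 2 + x ^ 2) * (R ^ 2 + x ^ 2)) := by gcongr
    _ = R * (R ^ 2 + x ^ 2) ^ 2 := by ring

lemma mul_deriv_sqTrunc (hR : R ≠ 0) (x : ℝ) :
    x * deriv (sqTrunc R) x = 2 * x ^ 2 * (R ^ 2 / (R ^ 2 + x ^ 2)) ^ 2 := by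
  rw [deriv_sqTrunc hR]
  field_simp

lemma div_sq_add_sq_mem_Icc (hR : R ≠ 0) (x : ℝ) : R ^ 2 / (R ^ 2 + x ^ 2) ∈ Set.Icc 0 1 :=
  ⟨by positivity, div_le_one_of_le₀ (by nlinarith [sq_nonneg x]) (by positivity)⟩

lemma tendsto_div_sq_add_sq_atTop (x : ℝ) :
    Tendsto (fun R : ℝ => R ^ 2 / (R ^ 2 + x ^ 2)) atTop (𝓝 1) := by
  have hden : Tendsto (fun R : ℝ => R ^ 2 + x ^ 2) atTop atTop :=
    tendsto_atTop_add_const_right _ _ (tendsto_pow_atTop two_ne_zero)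
  rw [← sub_zero (1 : ℝ)]
  refine ((tendsto_const_nhds (x := (1 : ℝ))).sub
    ((tendsto_const_nhds (x := x ^ 2)).div_atTop hden)).congr' ?_
  filter_upwards [eventually_ne_atTop 0] with R hR
  field_simp
  ring

lemma tendsto_sqTrunc_atTop (x : ℝ) : Tendsto (fun R => sqTrunc R x) atTop (𝓝 (x ^ 2)) := by
  simpa [sqTrunc_eq_sq_mul] using (tendsto_div_sq_add_sq_atTop x).const_mul (x ^ 2)

lemma tendsto_mul_deriv_sqTrunc_atTop (x : ℝ) :
    Tendsto (fun R => x * deriv (sqTrunc R) x) atTop (𝓝 (2 * x ^ 2)) := by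
  have := ((tendsto_div_sq_add_sq_atTop x).pow 2).const_mul (2 * x ^ 2)
  rw [one_pow, mul_one] at this
  refine this.congr' ?_
  filter_upwards [eventually_ne_atTop 0] with R hR
  rw [mul_deriv_sqTrunc hR]

end sqTrunc

def collisionTerm (γ : ℝ) (φ : ℝ → ℝ) (x y : ℝ) : ℝ :=
  |x - y| ^ γ * (2 * φ ((x + y) / 2) - φ x - φ y)

lemma collisionTerm_sq (γ x y : ℝ) :
    collisionTerm γ (· ^ 2) x y = -(1 / 2) * (|x - y| ^ γ * (x - y) ^ 2) := by
  unfold collisionTerm; ring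

lemma abs_collisionTerm_sqTrunc_le {γ R : ℝ} (hγ0 : 0 ≤ γ) (hγ1 : γ ≤ 1) (hR : R ≠ 0)
    (x y : ℝ) : |collisionTerm γ (sqTrunc R) x y| ≤ (1 + |x|) ^ 3 * (1 + |y|) ^ 3 := by
  have hφ : |2 * sqTrunc R ((x + y) / 2) - sqTrunc R x - sqTrunc R y| ≤ x ^ 2 + y ^ 2 := by
    rw [abs_le]
    constructor <;> nlinarith [sqTrunc_nonneg R x, sqTrunc_nonneg R y, sqTrunc_le_sq hR x,
      sqTrunc_le_sq hR y, sqTrunc_nonneg R ((x + y) / 2), sqTrunc_le_sq hR ((x + y) / 2),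
      sq_nonneg (x - y)]
  rw [collisionTerm, abs_mul, abs_of_nonneg (by positivity)]
  exact (mul_le_mul_of_nonneg_left hφ (by positivity)).trans
    (rpow_abs_sub_mul_sq_add_sq_le hγ0 hγ1 x y)

lemma setIntegral_le_sqrt_measureReal_mul {α : Type*} [MeasurableSpace α] {μ : Measure α}
    {f : α → ℝ} (hf : 0 ≤ f) (hf2 : MemLp f 2 μ) {s : Set α} (hs : MeasurableSet s)
    (hμs : μ s ≠ ⊤) :
    ∫ x in s, f x ∂μ ≤ √(μ.real s) * (∫ x, f x ^ 2 ∂μ) ^ (1 / 2 : ℝ) := by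
  have holder := integral_mul_le_Lp_mul_Lq_of_nonneg Real.HolderConjugate.two_two
    (Filter.Eventually.of_forall (Set.indicator_nonneg (fun _ _ => zero_le_one)))
    (Filter.Eventually.of_forall hf)
    (by rw [ENNReal.ofReal_ofNat]; exact memLp_indicator_const 2 hs (1 : ℝ) (Or.inr hμs))
    (by rwa [ENNReal.ofReal_ofNat])
  have hsq : ∀ x, s.indicator (fun _ => (1 : ℝ)) x ^ (2 : ℝ) = s.indicator 1 x := fun x => by
    by_cases hx : x ∈ s <;> simp [hx]
  have hmul : ∀ x, s.indicator (fun _ => (1 : ℝ)) x * f x = s.indicator f x := fun x => by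
    by_cases hx : x ∈ s <;> simp [hx]
  simp only [hsq, hmul, rpow_two, integral_indicator hs, Pi.one_apply, setIntegral_const,
    smul_eq_mul, mul_one] at holder
  rwa [sqrt_eq_rpow]

lemma integrable_mul_of_abs_le_mul {α : Type*} [MeasurableSpace α] {μ : Measure α}
    {f g w : α → ℝ} {C : ℝ} (hg : 0 ≤ g) (hwg : Integrable (fun x => w x * g x) μ)
    (hfg : AEStronglyMeasurable (fun x => f x * g x) μ) (hfw : ∀ x, |f x| ≤ C * w x) :
    Integrable (fun x => f x * g x) μ := by
  refine (hwg.const_mul C).mono' hfg (Filter.Eventually.of_forall fun x => ?_)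
  rw [norm_mul, norm_of_nonneg (hg x), ← mul_assoc]
  exact mul_le_mul_of_nonneg_right (hfw x) (hg x)

section Moments

variable {G : ℝ → ℝ}

lemma integrable_one_add_abs_rpow_three_mul_iff :
    (Integrable fun x => (1 + |x|) ^ (3 : ℝ) * G x) ↔ Integrable fun x => (1 + |x|) ^ 3 * G x := by
  norm_cast

lemma integrable_mul_of_abs_le_cube {f : ℝ → ℝ} {C : ℝ} (hG : 0 ≤ G) (hInt : Integrable G)
    (h3 : Integrable fun x => (1 + |x|) ^ (3 : ℝ) * G x) (hf : Measurable f)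
    (hfC : ∀ x, |f x| ≤ C * (1 + |x|) ^ 3) : Integrable fun x => f x * G x :=
  integrable_mul_of_abs_le_mul hG (integrable_one_add_abs_rpow_three_mul_iff.1 h3)
    (hf.aestronglyMeasurable.mul hInt.aestronglyMeasurable) hfC

lemma integrable_prod_mul_of_abs_le_cube {f : ℝ × ℝ → ℝ} {C : ℝ} (hG : 0 ≤ G)
    (hInt : Integrable G) (h3 : Integrable fun x => (1 + |x|) ^ (3 : ℝ) * G x)
    (hf : Measurable f) (hfC : ∀ z, |f z| ≤ C * ((1 + |z.1|) ^ 3 * (1 + |z.2|) ^ 3)) :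
    Integrable (fun z => f z * G z.1 * G z.2) (volume.prod volume) := by
  have h3' := integrable_one_add_abs_rpow_three_mul_iff.1 h3
  simp_rw [mul_assoc]
  refine integrable_mul_of_abs_le_mul (fun z => mul_nonneg (hG z.1) (hG z.2)) ?_
    (hf.aestronglyMeasurable.mul (hInt.mul_prod hInt).aestronglyMeasurable) hfC
  refine (h3'.mul_prod h3').congr (Filter.Eventually.of_forall fun z => ?_)
  simp only
  ring

lemma integrable_pow_mul {n : ℕ} (hn : n ≤ 3) (hG : 0 ≤ G) (hInt : Integrable G)
    (h3 : Integrable fun x => (1 + |x|) ^ (3 : ℝ) * G x) : Integrable fun x => x ^ n * G x :=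
  integrable_mul_of_abs_le_cube (C := 1) hG hInt h3 (by fun_prop) fun x => by
    rw [abs_pow, one_mul]
    calc |x| ^ n ≤ (1 + |x|) ^ n := by gcongr; linarith
      _ ≤ (1 + |x|) ^ 3 := pow_le_pow_right₀ (by linarith [abs_nonneg x]) hn

lemma integrable_one_add_abs_mul (hG : 0 ≤ G) (hInt : Integrable G)
    (h3 : Integrable fun x => (1 + |x|) ^ (3 : ℝ) * G x) :
    Integrable fun x => (1 + |x|) * G x :=
  integrable_mul_of_abs_le_cube (C := 1) hG hInt h3 (by fun_prop) fun x => by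
    rw [abs_of_nonneg (by positivity), one_mul]
    exact le_self_pow₀ (by linarith [abs_nonneg x]) (by norm_num)

lemma integrable_mul_one_add_abs_rpow_neg (hG : 0 ≤ G) (hInt : Integrable G)
    {γ : ℝ} (hγ : 0 ≤ γ) : Integrable (fun x => G x * (1 + |x|) ^ (-γ)) := by
  simp_rw [mul_comm (G _)]
  refine integrable_mul_of_abs_le_mul (w := 1) (C := 1) hG (by simpa using hInt)
    ((by fun_prop : Measurable fun x : ℝ => (1 + |x|) ^ (-γ)).aestronglyMeasurable.mul
      hInt.aestronglyMeasurable) fun x => ?_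
  rw [abs_of_nonneg (by positivity)]
  simpa using rpow_le_one_of_one_le_of_nonpos (by simp) (neg_nonpos.2 hγ)

lemma integral_sq_sub_mul_mul (hInt : Integrable G) (h1 : Integrable fun x => x * G x)
    (h2 : Integrable fun x => x ^ 2 * G x) :
    ∫ z, (z.1 - z.2) ^ 2 * G z.1 * G z.2 ∂(volume.prod volume) =
      2 * (∫ x, G x) * (∫ x, x ^ 2 * G x) - 2 * (∫ x, x * G x) ^ 2 := by
  have hexp : ∀ z : ℝ × ℝ, (z.1 - z.2) ^ 2 * G z.1 * G z.2 =
      (z.1 ^ 2 * G z.1) * G z.2 + G z.1 * (z.2 ^ 2 * G z.2)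
        - 2 * ((z.1 * G z.1) * (z.2 * G z.2)) := fun z => by ring
  have h22 : Integrable (fun z : ℝ × ℝ => z.1 ^ 2 * G z.1 * G z.2 + G z.1 * (z.2 ^ 2 * G z.2))
      (volume.prod volume) := (h2.mul_prod hInt).add (hInt.mul_prod h2)
  simp_rw [hexp]
  rw [integral_sub h22 ((h1.mul_prod h1).const_mul 2),
    integral_add (h2.mul_prod hInt) (hInt.mul_prod h2), integral_const_mul,
    integral_prod_mul (fun x => x ^ 2 * G x) G, integral_prod_mul G (fun x => x ^ 2 * G x),
    integral_prod_mul (fun x => x * G x) (fun x => x * G x)]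
  ring

end Moments

def collisionFreq (γ : ℝ) (G : ℝ → ℝ) (y : ℝ) : ℝ := ∫ x, |x - y| ^ γ * G x

def kappa (γ : ℝ) (G : ℝ → ℝ) : ℝ := 2 ^ (-γ) * ∫ x, G x * (1 + |x|) ^ (-γ)

theorem kappa_mul_sub_le_collisionFreq {γ δ : ℝ} {G : ℝ → ℝ} (hγ0 : 0 ≤ γ) (hγ1 : γ ≤ 1)
    (hδ0 : 0 ≤ δ) (hδ1 : δ ≤ 1) (hG : 0 ≤ G) (hInt : Integrable G) (hmass : ∫ x, G x = 1)
    (hG1 : Integrable (fun x => (1 + |x|) * G x)) (hG2 : Integrable (fun x => G x ^ 2))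
    (y : ℝ) :
    kappa γ G * (1 + |y|) ^ γ - (1 - δ ^ γ) - √(2 * δ) * (∫ x, G x ^ 2) ^ (1 / 2 : ℝ)
      ≤ collisionFreq γ G y := by
  set B := Metric.ball y δ
  have hB : MeasurableSet B := measurableSet_ball
  have hκ := integrable_mul_one_add_abs_rpow_neg hG hInt hγ0
  have hmain : Integrable fun x =>
      2 ^ (-γ) * (1 + |y|) ^ γ * (G x * (1 + |x|) ^ (-γ)) - (1 - δ ^ γ) * G x :=
    (hκ.const_mul _).sub (hInt.const_mul _)
  have hsigma : Integrable (fun x => |x - y| ^ γ * G x) :=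
    integrable_mul_of_abs_le_mul hG hG1
      ((by fun_prop : Measurable fun x : ℝ => |x - y| ^ γ).aestronglyMeasurable.mul
        hInt.aestronglyMeasurable) fun x => by
      rw [abs_of_nonneg (by positivity), mul_comm]
      exact rpow_abs_sub_le_mul hγ0 hγ1 x y
  have hlower : ∫ x, (2 ^ (-γ) * (1 + |y|) ^ γ * (G x * (1 + |x|) ^ (-γ))
      - (1 - δ ^ γ) * G x - B.indicator G x) ≤ ∫ x, |x - y| ^ γ * G x := by
    refine integral_mono (hmain.sub (hInt.indicator hB)) hsigma fun x => ?_
    have hsplit : (2 ^ (-γ) * (1 + |y|) ^ γ * (1 + |x|) ^ (-γ) - (1 - δ ^ γ)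
        - B.indicator 1 x) * G x = 2 ^ (-γ) * (1 + |y|) ^ γ * (G x * (1 + |x|) ^ (-γ))
          - (1 - δ ^ γ) * G x - B.indicator G x := by
      by_cases hx : x ∈ B <;> simp only [hx, Set.indicator_of_mem, Set.indicator_of_notMem,
        not_false_eq_true, Pi.one_apply, sub_zero] <;> ring
    rw [← hsplit]
    exact mul_le_mul_of_nonneg_right (rpow_neg_mul_sub_le_rpow_abs_sub hγ0 hδ0 hδ1 x y) (hG x)
  rw [integral_sub hmain (hInt.indicator hB), integral_sub (hκ.const_mul _) (hInt.const_mul _),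
    integral_const_mul, integral_const_mul, hmass, integral_indicator hB] at hlower
  have hball : ∫ x in B, G x ≤ √(2 * δ) * (∫ x, G x ^ 2) ^ (1 / 2 : ℝ) := by
    have := setIntegral_le_sqrt_measureReal_mul hG
      ((memLp_two_iff_integrable_sq hInt.aestronglyMeasurable).2 hG2) hB measure_ball_lt_top.ne
    rwa [measureReal_def, Real.volume_ball, ENNReal.toReal_ofReal (by positivity)] at this
  unfold kappa collisionFreq
  linarith

lemma kappa_le_one {γ : ℝ} {G : ℝ → ℝ} (hγ : 0 ≤ γ) (hG : 0 ≤ G) (hInt : Integrable G)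
    (hmass : ∫ x, G x = 1) : kappa γ G ≤ 1 := by
  have hw : ∫ x, G x * (1 + |x|) ^ (-γ) ≤ ∫ x, G x :=
    integral_mono (integrable_mul_one_add_abs_rpow_neg hG hInt hγ) hInt fun x =>
      mul_le_of_le_one_right (hG x) (rpow_le_one_of_one_le_of_nonpos (by simp) (neg_nonpos.2 hγ))
  rw [hmass] at hw
  exact mul_le_one₀ (rpow_le_one_of_one_le_of_nonpos one_le_two (neg_nonpos.2 hγ))
    (integral_nonneg fun x => mul_nonneg (hG x) (by positivity)) hw

lemma one_add_rpow_neg_mul_le_integral {γ R : ℝ} {G : ℝ → ℝ} (hγ : 0 ≤ γ) (hR : 0 < R)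
    (hG : 0 ≤ G) (hInt : Integrable G) (h2 : Integrable fun x => x ^ 2 * G x) :
    (1 + R) ^ (-γ) * ((∫ x, G x) - (∫ x, x ^ 2 * G x) / R ^ 2) ≤
      ∫ x, G x * (1 + |x|) ^ (-γ) := by
  have hdiff : Integrable fun x => G x - x ^ 2 * G x / R ^ 2 := hInt.sub (h2.div_const _)
  have hle := integral_mono (hdiff.const_mul ((1 + R) ^ (-γ)))
    (integrable_mul_one_add_abs_rpow_neg hG hInt hγ) fun x => by
      have := mul_le_mul_of_nonneg_right
        (one_add_rpow_neg_mul_one_sub_sq_div_le hγ hR x) (hG x)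
      calc (1 + R) ^ (-γ) * (G x - x ^ 2 * G x / R ^ 2)
          = (1 + R) ^ (-γ) * (1 - x ^ 2 / R ^ 2) * G x := by ring
        _ ≤ G x * (1 + |x|) ^ (-γ) := by linarith
  rwa [integral_const_mul, integral_sub hInt (h2.div_const _), integral_div] at hle

lemma integrable_collisionTerm_sqTrunc_mul {γ R : ℝ} {G : ℝ → ℝ} (hγ0 : 0 ≤ γ) (hγ1 : γ ≤ 1)
    (hR : R ≠ 0) (hG : 0 ≤ G) (hInt : Integrable G)
    (h3 : Integrable fun x => (1 + |x|) ^ (3 : ℝ) * G x) :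
    Integrable (fun z : ℝ × ℝ => collisionTerm γ (sqTrunc R) z.1 z.2 * G z.1 * G z.2)
      (volume.prod volume) :=
  integrable_prod_mul_of_abs_le_cube (C := 1) hG hInt h3
    (by unfold collisionTerm; fun_prop) fun z => by
      simpa using abs_collisionTerm_sqTrunc_le hγ0 hγ1 hR z.1 z.2

theorem IsProfile.weak_sqTrunc {γ R : ℝ} {G : ℝ → ℝ} (hp : IsProfile γ G) (hγ0 : 0 ≤ γ)
    (hγ1 : γ ≤ 1) (hR : 0 < R) :
    -(1 / 4) * ∫ x, x * deriv (sqTrunc R) x * G x =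
      (1 / 2) * ∫ z, collisionTerm γ (sqTrunc R) z.1 z.2 * G z.1 * G z.2
        ∂(volume.prod volume) := by
  obtain ⟨hG, hInt, h3, -, -, hweak⟩ := hp
  rw [← integral_integral (f := fun x y => collisionTerm γ (sqTrunc R) x y * G x * G y)]
  · refine hweak _ (contDiff_sqTrunc hR.ne') ⟨R ^ 2 + R, fun x => ⟨?_, ?_⟩⟩
    · rw [abs_of_nonneg (sqTrunc_nonneg R x)]
      linarith [sqTrunc_le_sq_left hR.ne' x]
    · nlinarith [abs_deriv_sqTrunc_le hR x, sq_nonneg R]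
  · exact integrable_collisionTerm_sqTrunc_mul hγ0 hγ1 hR.ne' hG hInt h3

lemma tendsto_integral_mul_deriv_sqTrunc {G : ℝ → ℝ} (hG : 0 ≤ G) (hInt : Integrable G)
    (hx2 : Integrable fun x => x ^ 2 * G x) :
    Tendsto (fun R => ∫ x, x * deriv (sqTrunc R) x * G x) atTop
      (𝓝 (∫ x, 2 * x ^ 2 * G x)) := by
  refine tendsto_integral_filter_of_dominated_convergence (fun x => 2 * x ^ 2 * G x)
    (Filter.Eventually.of_forall fun R => (measurable_id.mul
      (measurable_deriv _)).aestronglyMeasurable.mul hInt.aestronglyMeasurable) ?_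
    (by simpa [mul_assoc] using hx2.const_mul 2)
    (Filter.Eventually.of_forall fun x => (tendsto_mul_deriv_sqTrunc_atTop x).mul_const _)
  filter_upwards [eventually_ne_atTop 0] with R hR
  refine Filter.Eventually.of_forall fun x => ?_
  obtain ⟨hρ0, hρ1⟩ := div_sq_add_sq_mem_Icc hR x
  rw [mul_deriv_sqTrunc hR, norm_of_nonneg (mul_nonneg (by positivity) (hG x))]
  exact mul_le_mul_of_nonneg_right
    (mul_le_of_le_one_right (by positivity) (pow_le_one₀ hρ0 hρ1)) (hG x)

lemma tendsto_integral_collisionTerm_sqTrunc {γ : ℝ} {G : ℝ → ℝ} (hγ0 : 0 ≤ γ) (hγ1 : γ ≤ 1)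
    (hG : 0 ≤ G) (hInt : Integrable G) (h3 : Integrable fun x => (1 + |x|) ^ (3 : ℝ) * G x) :
    Tendsto (fun R => ∫ z, collisionTerm γ (sqTrunc R) z.1 z.2 * G z.1 * G z.2
      ∂(volume.prod volume)) atTop
      (𝓝 (∫ z, collisionTerm γ (· ^ 2) z.1 z.2 * G z.1 * G z.2 ∂(volume.prod volume))) := by
  have hbound : Integrable (fun z : ℝ × ℝ => (1 + |z.1|) ^ 3 * (1 + |z.2|) ^ 3 * G z.1 * G z.2)
      (volume.prod volume) :=
    integrable_prod_mul_of_abs_le_cube (C := 1) hG hInt h3 (by fun_prop) fun z => by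
      rw [abs_of_nonneg (by positivity), one_mul]
  refine tendsto_integral_filter_of_dominated_convergence _ ?_ ?_ hbound
    (Filter.Eventually.of_forall fun z => ?_)
  · filter_upwards [eventually_ne_atTop 0] with R hR
    exact (integrable_collisionTerm_sqTrunc_mul hγ0 hγ1 hR hG hInt h3).aestronglyMeasurable
  · filter_upwards [eventually_ne_atTop 0] with R hR
    refine Filter.Eventually.of_forall fun z => ?_
    rw [norm_mul, norm_mul, norm_of_nonneg (hG z.1), norm_of_nonneg (hG z.2), norm_eq_abs]
    exact mul_le_mul_of_nonneg_right (mul_le_mul_of_nonneg_right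
      (abs_collisionTerm_sqTrunc_le hγ0 hγ1 hR z.1 z.2) (hG z.1)) (hG z.2)
  · unfold collisionTerm
    exact (((((tendsto_sqTrunc_atTop _).const_mul 2).sub (tendsto_sqTrunc_atTop _)).sub
      (tendsto_sqTrunc_atTop _)).const_mul _).mul_const _ |>.mul_const _

theorem IsProfile.integral_rpow_abs_sub_mul_sq {γ : ℝ} {G : ℝ → ℝ} (hp : IsProfile γ G)
    (hγ0 : 0 ≤ γ) (hγ1 : γ ≤ 1) :
    ∫ z, |z.1 - z.2| ^ γ * (z.1 - z.2) ^ 2 * G z.1 * G z.2 ∂(volume.prod volume) =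
      2 * ∫ x, x ^ 2 * G x := by
  have hweak := fun R (hR : 0 < R) => hp.weak_sqTrunc hγ0 hγ1 hR
  obtain ⟨hG, hInt, h3, -, -, -⟩ := hp
  have hlhs := tendsto_integral_mul_deriv_sqTrunc hG hInt
    (integrable_pow_mul (n := 2) (by norm_num) hG hInt h3)
  have hrhs := tendsto_integral_collisionTerm_sqTrunc hγ0 hγ1 hG hInt h3
  have hlim := tendsto_nhds_unique ((hlhs.const_mul (-(1 / 4))).congr'
    (eventually_gt_atTop 0 |>.mono hweak)) (hrhs.const_mul (1 / 2))
  simp_rw [collisionTerm_sq, mul_assoc, integral_const_mul] at hlim ⊢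
  linarith

theorem IsProfile.integral_sq_mul_le {γ : ℝ} {G : ℝ → ℝ} (hp : IsProfile γ G) (hγ0 : 0 < γ)
    (hγ1 : γ ≤ 1) : ∫ x, x ^ 2 * G x ≤ 3 / 2 := by
  have hcol := hp.integral_rpow_abs_sub_mul_sq hγ0.le hγ1
  obtain ⟨hG, hInt, h3, hmass, hmom, -⟩ := hp
  have hx1 : Integrable fun x => x * G x := by
    simpa using integrable_pow_mul (n := 1) (by norm_num) hG hInt h3
  have hvar := integral_sq_sub_mul_mul hInt hx1 (integrable_pow_mul (n := 2) (by norm_num) hG hInt h3)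
  rw [hmass, hmom] at hvar
  have hGG := hInt.mul_prod hInt
  have hmassGG : ∫ z, G z.1 * G z.2 ∂(volume.prod volume) = 1 := by
    rw [integral_prod_mul G G, hmass, one_mul]
  have hA : Integrable (fun z : ℝ × ℝ => (z.1 - z.2) ^ 2 * G z.1 * G z.2) (volume.prod volume) :=
    integrable_prod_mul_of_abs_le_cube (C := 2) hG hInt h3 (by fun_prop) fun z => by
      have := rpow_abs_sub_mul_sq_add_sq_le le_rfl zero_le_one z.1 z.2
      rw [rpow_zero, one_mul] at this
      rw [abs_of_nonneg (sq_nonneg _)]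
      nlinarith [sq_nonneg (z.1 + z.2)]
  have hB : Integrable (fun z : ℝ × ℝ => |z.1 - z.2| ^ γ * (z.1 - z.2) ^ 2 * G z.1 * G z.2)
      (volume.prod volume) :=
    integrable_prod_mul_of_abs_le_cube (C := 2) hG hInt h3 (by fun_prop) fun z => by
      have := rpow_abs_sub_mul_sq_add_sq_le hγ0.le hγ1 z.1 z.2
      rw [abs_of_nonneg (by positivity)]
      nlinarith [sq_nonneg (z.1 + z.2), rpow_nonneg (abs_nonneg (z.1 - z.2)) γ]
  have hBA : Integrable (fun z : ℝ × ℝ =>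
      |z.1 - z.2| ^ γ * (z.1 - z.2) ^ 2 * G z.1 * G z.2 - (z.1 - z.2) ^ 2 * G z.1 * G z.2)
      (volume.prod volume) := hB.sub hA
  have hC : Integrable (fun z : ℝ × ℝ => 3 * γ * (G z.1 * G z.2)
      + (|z.1 - z.2| ^ γ * (z.1 - z.2) ^ 2 * G z.1 * G z.2 - (z.1 - z.2) ^ 2 * G z.1 * G z.2))
      (volume.prod volume) := (hGG.const_mul _).add hBA
  have key := integral_mono (hA.const_mul γ) hC fun z => by
    have := mul_le_mul_of_nonneg_right (mul_sq_sub_three_le hγ0.le (z.1 - z.2))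
      (mul_nonneg (hG z.1) (hG z.2))
    linarith
  rw [integral_const_mul, integral_add (hGG.const_mul _) hBA, integral_sub hB hA,
    integral_const_mul, hcol, hvar, hmassGG] at key
  nlinarith

theorem IsProfile.rpow_neg_mul_le_kappa {γ R : ℝ} {G : ℝ → ℝ} (hp : IsProfile γ G)
    (hγ0 : 0 < γ) (hγ1 : γ ≤ 1) (hR : 0 < R) :
    (2 * (1 + R)) ^ (-γ) * (1 - 3 / 2 / R ^ 2) ≤ kappa γ G := by
  have hM := hp.integral_sq_mul_le hγ0 hγ1
  obtain ⟨hG, hInt, h3, hmass, -, -⟩ := hp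
  have hw := one_add_rpow_neg_mul_le_integral hγ0.le hR hG hInt
    (integrable_pow_mul (n := 2) (by norm_num) hG hInt h3)
  rw [hmass] at hw
  unfold kappa
  rw [mul_rpow zero_le_two (by positivity), mul_assoc]
  gcongr
  refine le_trans ?_ hw
  gcongr

theorem tendsto_kappa_nhdsGT_zero {Gf : ℝ → ℝ → ℝ}
    (hGf : ∀ γ ∈ Ioo (0 : ℝ) 1, IsProfile γ (Gf γ)) :
    Tendsto (fun γ => kappa γ (Gf γ)) (𝓝[>] 0) (𝓝 1) := by
  have hmem : ∀ᶠ γ in 𝓝[>] (0 : ℝ), γ ∈ Ioo 0 1 := Ioo_mem_nhdsGT one_pos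
  refine tendsto_order.2 ⟨fun a ha => ?_, fun a ha => ?_⟩
  · have htail : Tendsto (fun R : ℝ => 1 - 3 / 2 / R ^ 2) atTop (𝓝 1) := by
      simpa using tendsto_const_nhds.sub
        ((tendsto_const_nhds (x := (3 / 2 : ℝ))).div_atTop (tendsto_pow_atTop two_ne_zero))
    obtain ⟨R, hR, haR⟩ := ((eventually_gt_atTop 0).and (htail.eventually (lt_mem_nhds ha))).exists
    have hcont : Tendsto (fun γ : ℝ => (2 * (1 + R)) ^ (-γ) * (1 - 3 / 2 / R ^ 2)) (𝓝[>] 0)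
        (𝓝 (1 - 3 / 2 / R ^ 2)) := by
      have : ContinuousAt (fun γ : ℝ => (2 * (1 + R)) ^ (-γ)) 0 :=
        (continuousAt_const_rpow (by positivity)).comp continuousAt_neg
      simpa using (this.tendsto.mono_left nhdsWithin_le_nhds).mul_const (1 - 3 / 2 / R ^ 2)
    filter_upwards [hcont.eventually (lt_mem_nhds haR), hmem] with γ hγ hγmem
    exact hγ.trans_le ((hGf γ hγmem).rpow_neg_mul_le_kappa hγmem.1 hγmem.2.le hR)
  · filter_upwards [hmem] with γ hγ
    obtain ⟨hG, hInt, -, hmass, -, -⟩ := hGf γ hγ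
    exact (kappa_le_one hγ.1.le hG hInt hmass).trans_lt ha

/-- **Lower control of the collision frequency.**
(i) For `γ ∈ (0,1)` and `G ∈ 𝓔_γ ∩ L²`, with `Σ_γ(y) = ∫ |x−y|^γ G(x) dx` and
`κ_γ = 2^{−γ} ∫ G(x)(1+|x|)^{−γ} dx`, one has for every `δ̃ ∈ (0,1)` and `y ∈ ℝ`
`Σ_γ(y) ≥ κ_γ (1+|y|)^γ − (1 − δ̃^γ) − √(2δ̃)‖G‖_{L²}`.
(ii) For any family of profiles, `κ_γ → 1` as `γ → 0⁺`. -/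
theorem collision_frequency_lower_bound :
    (∀ γ ∈ Ioo (0:ℝ) 1, ∀ G : ℝ → ℝ, IsProfile γ G →
      Integrable (fun x => (G x) ^ 2) →
      ∀ δ ∈ Ioo (0:ℝ) 1, ∀ y : ℝ,
        (∫ x, |x - y| ^ γ * G x) ≥
          ((2:ℝ) ^ (-γ) * ∫ x, G x * (1 + |x|) ^ (-γ)) * (1 + |y|) ^ γ
            - (1 - δ ^ γ) - Real.sqrt (2 * δ) * (∫ x, (G x) ^ 2) ^ ((1:ℝ)/2)) ∧
    (∀ Gf : ℝ → ℝ → ℝ, (∀ γ ∈ Ioo (0:ℝ) 1, IsProfile γ (Gf γ)) →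
      Tendsto (fun γ : ℝ => (2:ℝ) ^ (-γ) * ∫ x, Gf γ x * (1 + |x|) ^ (-γ))
        (nhdsWithin 0 (Ioi 0)) (nhds 1)) := by
  refine ⟨fun γ hγ G hp hG2 δ hδ y => ?_, fun Gf hGf => tendsto_kappa_nhdsGT_zero hGf⟩
  obtain ⟨hG, hInt, h3, hmass, -, -⟩ := hp
  exact kappa_mul_sub_le_collisionFreq hγ.1.le hγ.2.le hδ.1.le hδ.2.le hG hInt hmass
    (integrable_one_add_abs_mul hG hInt h3) hG2 y

end
end
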